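/- Let h, s be positive integers with s ≥ 4 and let 𝔞 = (S, 𝓛) be an (s,h)-array in a graph G. Then the induced subgraph G[S ∪ V(𝓛)] contains no induced K₄ and no induced K_{2,3}. -/
import Mathlib


open SimpleGraph

universe u

variable {V : Type u}

structure IndPath (G : SimpleGraph V) where
  n : ℕ
  npos : 0 < n
  f : Fin n → V
  inj : Function.Injective f
  adj : ∀ i j : Fin n, G.Adj (f i) (f j) ↔ ((i : ℕ) + 1 = j ∨ (j : ℕ) + 1 = i)

def IndPath.verts {G : SimpleGraph V} (L : IndPath G) : Set V := Set.range L.f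

def IndPath.length {G : SimpleGraph V} (L : IndPath G) : ℕ := L.n - 1

structure IndCycle (G : SimpleGraph V) where
  n : ℕ
  hn : 3 ≤ n
  f : ZMod n → V
  inj : Function.Injective f
  adj : ∀ i j : ZMod n, G.Adj (f i) (f j) ↔ (i = j + 1 ∨ j = i + 1)

def Pinched (c h : ℕ) (G : SimpleGraph V) : Prop :=
  ¬ ∃ (x : V) (C : Fin c → IndCycle G),
      (∀ i, h + 2 ≤ (C i).n) ∧
      (∀ i, (C i).f 0 = x) ∧
      (∀ i j : Fin c, i ≠ j →
        (Set.range (C i).f ∩ Set.range (C j).f = {x}) ∧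
        (∀ u ∈ Set.range (C i).f, ∀ v ∈ Set.range (C j).f,
          u ≠ x → v ≠ x → ¬ G.Adj u v))

structure Constellation (G : SimpleGraph V) (s l : ℕ) where
  S : Finset V
  card_S : S.card = s
  stable : ∀ x ∈ S, ∀ y ∈ S, ¬ G.Adj x y
  P : Fin l → IndPath G
  disj : ∀ i j : Fin l, i ≠ j → Disjoint (P i).verts (P j).verts
  sep : ∀ x ∈ S, ∀ i : Fin l, x ∉ (P i).verts
  nbr : ∀ x ∈ S, ∀ i : Fin l, ∃ v ∈ (P i).verts, G.Adj x v

def Constellation.Plain {G : SimpleGraph V} {s l : ℕ} (c : Constellation G s l) : Prop :=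
  ∀ i j : Fin l, i ≠ j → ∀ u ∈ (c.P i).verts, ∀ v ∈ (c.P j).verts, ¬ G.Adj u v

def Constellation.Meager {G : SimpleGraph V} {s l : ℕ} (c : Constellation G s l) (d : ℕ) : Prop :=
  ∀ i : Fin l, ∀ p : Fin (c.P i).n, ((↑c.S : Set V) ∩ {x | G.Adj x ((c.P i).f p)}).ncard ≤ d

def Constellation.Hollow {G : SimpleGraph V} {s l : ℕ} (c : Constellation G s l) (h : ℕ) : Prop :=
  ∀ x ∈ c.S, ∀ i : Fin l, ∀ p q : Fin (c.P i).n, (p : ℕ) < q →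
    G.Adj x ((c.P i).f p) → G.Adj x ((c.P i).f q) →
    (∀ r : Fin (c.P i).n, (p : ℕ) < r → (r : ℕ) < q → ¬ G.Adj x ((c.P i).f r)) →
    (q : ℕ) - p < h

structure PathAlignment (G : SimpleGraph V) (s : ℕ) extends Constellation G s 1 where
  π : Fin s → V
  π_inj : Function.Injective π
  π_mem : ∀ i, π i ∈ S
  order : ∃ rev : Bool, ∀ i j : Fin s, i < j →
    ∀ p q : Fin (P 0).n, G.Adj (π i) ((P 0).f p) → G.Adj (π j) ((P 0).f q) →
      (if rev then (q : ℕ) < p else (p : ℕ) < q)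

structure PDArray (G : SimpleGraph V) (s h : ℕ) extends Constellation G s s where
  plain : toConstellation.Plain
  hollow : toConstellation.Hollow h
  π : Fin s → V
  π_inj : Function.Injective π
  π_mem : ∀ i, π i ∈ S
  aligned : ∀ k : Fin s, ∃ rev : Bool, ∀ i j : Fin s, i < j →
    ∀ p q : Fin (P k).n, G.Adj (π i) ((P k).f p) → G.Adj (π j) ((P k).f q) →
      (if rev then (q : ℕ) < p else (p : ℕ) < q)

def PDArray.verts {G : SimpleGraph V} {s h : ℕ} (A : PDArray G s h) : Set V :=
  (↑A.S : Set V) ∪ ⋃ i : Fin s, (A.P i).verts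

def IsMinor {W : Type*} (H : SimpleGraph W) (G : SimpleGraph V) : Prop :=
  ∃ B : W → Set V,
    (∀ w, (B w).Nonempty) ∧
    (∀ w, (G.induce (B w)).Connected) ∧
    (∀ w w' : W, w ≠ w' → Disjoint (B w) (B w')) ∧
    (∀ w w' : W, H.Adj w w' → ∃ u ∈ B w, ∃ v ∈ B w', G.Adj u v)

def TreewidthLe (G : SimpleGraph V) (w : ℕ) : Prop :=
  ∃ (ι : Type u) (T : SimpleGraph ι), T.IsAcyclic ∧ T.Connected ∧
    ∃ t : V → Set ι,
      (∀ v, (t v).Nonempty) ∧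
      (∀ v, (T.induce (t v)).Connected) ∧
      (∀ u v : V, G.Adj u v → (t u ∩ t v).Nonempty) ∧
      (∀ x : ι, {v : V | x ∈ t v}.ncard ≤ w + 1)

def PD (s : ℕ) : SimpleGraph (Fin s ⊕ Fin s × Fin s) :=
  SimpleGraph.fromRel (fun a b =>
    match a, b with
    | Sum.inr (i, k), Sum.inr (i', k') => i = i' ∧ (k : ℕ) + 1 = (k' : ℕ)
    | Sum.inl j, Sum.inr (_, k) => k = j
    | _, _ => False)

section Aux

variable {G : SimpleGraph V} {s h : ℕ}

def OnPath (A : PDArray G s h) (v : V) : Prop :=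
  ∃ i, ∃ p : Fin (A.P i).n, (A.P i).f p = v

lemma mem_verts (A : PDArray G s h) {v : V} (hv : v ∈ A.verts) :
    v ∈ A.S ∨ OnPath A v := by
  simp only [PDArray.verts, IndPath.verts, Set.mem_union, Set.mem_iUnion, Set.mem_range,
    Finset.mem_coe] at hv
  exact hv

lemma pi_surj (A : PDArray G s h) {u : V} (hu : u ∈ A.S) : ∃ i, A.π i = u := by
  classical
  have himg : Finset.image A.π Finset.univ = A.S := by
    apply Finset.eq_of_subset_of_card_le
    · intro x hx
      simp only [Finset.mem_image] at hx
      obtain ⟨i, -, rfl⟩ := hx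
      exact A.π_mem i
    · rw [A.card_S, Finset.card_image_of_injective _ A.π_inj, Finset.card_univ,
        Fintype.card_fin]
  rw [← himg] at hu
  simp only [Finset.mem_image] at hu
  obtain ⟨i, -, hi⟩ := hu
  exact ⟨i, hi⟩

lemma same_path (A : PDArray G s h) {i j : Fin s} {p : Fin (A.P i).n} {q : Fin (A.P j).n}
    (hadj : G.Adj ((A.P i).f p) ((A.P j).f q)) : i = j := by
  by_contra hij
  exact A.plain i j hij _ ⟨p, rfl⟩ _ ⟨q, rfl⟩ hadj

/-- Two distinct vertices of `S` have no common neighbour in the array. -/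
lemma F1 (A : PDArray G s h) {u v w : V} (hu : u ∈ A.S) (hv : v ∈ A.S) (huv : u ≠ v)
    (hw : w ∈ A.verts) (h1 : G.Adj u w) (h2 : G.Adj v w) : False := by
  rcases mem_verts A hw with hws | hwp
  · exact A.stable u hu w hws h1
  · obtain ⟨k, p, rfl⟩ := hwp
    obtain ⟨i, rfl⟩ := pi_surj A hu
    obtain ⟨j, rfl⟩ := pi_surj A hv
    have hij : i ≠ j := fun e => huv (by rw [e])
    obtain ⟨rev, hal⟩ := A.aligned k
    rcases hij.lt_or_gt with hlt | hlt
    · have := hal i j hlt p p h1 h2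
      cases rev <;> simp at this
    · have := hal j i hlt p p h2 h1
      cases rev <;> simp at this

/-- A path vertex has at most two path-vertex neighbours. -/
lemma F2 (A : PDArray G s h) {u w1 w2 w3 : V} (hu : OnPath A u)
    (h1 : OnPath A w1) (h2 : OnPath A w2) (h3 : OnPath A w3)
    (d12 : w1 ≠ w2) (d13 : w1 ≠ w3) (d23 : w2 ≠ w3)
    (a1 : G.Adj u w1) (a2 : G.Adj u w2) (a3 : G.Adj u w3) : False := by
  obtain ⟨i, p, rfl⟩ := hu
  obtain ⟨j1, q1, rfl⟩ := h1
  obtain ⟨j2, q2, rfl⟩ := h2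
  obtain ⟨j3, q3, rfl⟩ := h3
  obtain rfl := same_path A a1
  obtain rfl := same_path A a2
  obtain rfl := same_path A a3
  have e1 := ((A.P _).adj _ _).mp a1
  have e2 := ((A.P _).adj _ _).mp a2
  have e3 := ((A.P _).adj _ _).mp a3
  have n12 : (q1 : ℕ) ≠ q2 := fun e => d12 (congrArg _ (Fin.ext e))
  have n13 : (q1 : ℕ) ≠ q3 := fun e => d13 (congrArg _ (Fin.ext e))
  have n23 : (q2 : ℕ) ≠ q3 := fun e => d23 (congrArg _ (Fin.ext e))
  omega

/-- Two distinct path vertices have at most one common path-vertex neighbour. -/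
lemma F3 (A : PDArray G s h) {u u' w1 w2 : V} (hu : OnPath A u) (hu' : OnPath A u')
    (h1 : OnPath A w1) (h2 : OnPath A w2) (d : w1 ≠ w2)
    (a1 : G.Adj u w1) (a2 : G.Adj u w2) (b1 : G.Adj u' w1) (b2 : G.Adj u' w2) :
    u = u' := by
  obtain ⟨i, p, rfl⟩ := hu
  obtain ⟨i', p', rfl⟩ := hu'
  obtain ⟨j1, q1, rfl⟩ := h1
  obtain ⟨j2, q2, rfl⟩ := h2
  obtain rfl := same_path A a1
  obtain rfl := same_path A a2
  obtain rfl := same_path A b1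
  have e1 := ((A.P _).adj _ _).mp a1
  have e2 := ((A.P _).adj _ _).mp a2
  have e3 := ((A.P _).adj _ _).mp b1
  have e4 := ((A.P _).adj _ _).mp b2
  have n12 : (q1 : ℕ) ≠ q2 := fun e => d (congrArg _ (Fin.ext e))
  have : (p : ℕ) = p' := by omega
  exact congrArg _ (Fin.ext this)

/-- No triangle among path vertices. -/
lemma F4 (A : PDArray G s h) {u v w : V} (hu : OnPath A u) (hv : OnPath A v)
    (hw : OnPath A w) (duv : u ≠ v) (duw : u ≠ w) (dvw : v ≠ w)
    (auv : G.Adj u v) (auw : G.Adj u w) (avw : G.Adj v w) : False := by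
  obtain ⟨i, p, rfl⟩ := hu
  obtain ⟨j, q, rfl⟩ := hv
  obtain ⟨k, r, rfl⟩ := hw
  obtain rfl := same_path A auv
  obtain rfl := same_path A auw
  have e1 := ((A.P _).adj _ _).mp auv
  have e2 := ((A.P _).adj _ _).mp auw
  have e3 := ((A.P _).adj _ _).mp avw
  have n1 : (p : ℕ) ≠ q := fun e => duv (congrArg _ (Fin.ext e))
  have n2 : (p : ℕ) ≠ r := fun e => duw (congrArg _ (Fin.ext e))
  have n3 : (q : ℕ) ≠ r := fun e => dvw (congrArg _ (Fin.ext e))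
  omega

end Aux

/-- If `s ≥ 4` and `𝔞 = (S, 𝓛)` is an `(s,h)`-array in `G`, then
`G[S ∪ V(𝓛)]` contains no induced `K₄` (no clique of size 4) and no induced
`K_{2,3}` (two disjoint stable sets, of sizes 2 and 3, complete to each
other). -/
theorem stmt13 (h s : ℕ) (hh : 0 < h) (hs : 4 ≤ s)
    (V : Type u) (G : SimpleGraph V) (A : PDArray G s h) :
    (¬ ∃ K : Finset A.verts,
        (G.induce A.verts).IsClique (↑K : Set A.verts) ∧ K.card = 4) ∧
    (¬ ∃ X Y : Finset A.verts, Disjoint X Y ∧ X.card = 2 ∧ Y.card = 3 ∧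
        (∀ x ∈ X, ∀ y ∈ X, ¬ (G.induce A.verts).Adj x y) ∧
        (∀ x ∈ Y, ∀ y ∈ Y, ¬ (G.induce A.verts).Adj x y) ∧
        (∀ x ∈ X, ∀ y ∈ Y, (G.induce A.verts).Adj x y)) := by
  classical
  constructor
  · rintro ⟨K, hK, hK4⟩
    obtain ⟨a, ha⟩ := Finset.card_pos.mp (by omega : 0 < K.card)
    have h3 : (K.erase a).card = 3 := by rw [Finset.card_erase_of_mem ha, hK4]
    obtain ⟨b, c, d, hbc, hbd, hcd, hE⟩ := Finset.card_eq_three.mp h3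
    have hb' : b ∈ K.erase a := by rw [hE]; simp
    have hc' : c ∈ K.erase a := by rw [hE]; simp
    have hd' : d ∈ K.erase a := by rw [hE]; simp
    have hab : a ≠ b := (Finset.ne_of_mem_erase hb').symm
    have hac : a ≠ c := (Finset.ne_of_mem_erase hc').symm
    have had : a ≠ d := (Finset.ne_of_mem_erase hd').symm
    have hb := Finset.mem_of_mem_erase hb'
    have hc := Finset.mem_of_mem_erase hc'
    have hd := Finset.mem_of_mem_erase hd'
    have hadj : ∀ {x y : A.verts}, x ∈ K → y ∈ K → x ≠ y → G.Adj x.1 y.1 := by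
      intro x y hx hy hne
      exact hK (Finset.mem_coe.mpr hx) (Finset.mem_coe.mpr hy) hne
    have Aab := hadj ha hb hab
    have Aac := hadj ha hc hac
    have Aad := hadj ha hd had
    have Abc := hadj hb hc hbc
    have Abd := hadj hb hd hbd
    have Acd := hadj hc hd hcd
    have Nab : a.1 ≠ b.1 := fun e => hab (Subtype.ext e)
    have Nac : a.1 ≠ c.1 := fun e => hac (Subtype.ext e)
    have Nad : a.1 ≠ d.1 := fun e => had (Subtype.ext e)
    have Nbc : b.1 ≠ c.1 := fun e => hbc (Subtype.ext e)
    have Nbd : b.1 ≠ d.1 := fun e => hbd (Subtype.ext e)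
    have Ncd : c.1 ≠ d.1 := fun e => hcd (Subtype.ext e)
    rcases mem_verts A a.2 with Ta | Pa <;>
    rcases mem_verts A b.2 with Tb | Pb <;>
    rcases mem_verts A c.2 with Tc | Pc <;>
    rcases mem_verts A d.2 with Td | Pd <;>
    first
      | exact A.stable _ Ta _ Tb Aab
      | exact A.stable _ Ta _ Tc Aac
      | exact A.stable _ Ta _ Td Aad
      | exact A.stable _ Tb _ Tc Abc
      | exact A.stable _ Tb _ Td Abd
      | exact A.stable _ Tc _ Td Acd
      | exact F4 A Pb Pc Pd Nbc Nbd Ncd Abc Abd Acd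
      | exact F4 A Pa Pc Pd Nac Nad Ncd Aac Aad Acd
      | exact F4 A Pa Pb Pd Nab Nad Nbd Aab Aad Abd
      | exact F4 A Pa Pb Pc Nab Nac Nbc Aab Aac Abc
  · rintro ⟨X, Y, -, hX2, hY3, -, -, hXY⟩
    obtain ⟨x1, x2, hx, rfl⟩ := Finset.card_eq_two.mp hX2
    obtain ⟨y1, y2, y3, hy12, hy13, hy23, rfl⟩ := Finset.card_eq_three.mp hY3
    have hadj : ∀ x ∈ ({x1, x2} : Finset A.verts), ∀ y ∈ ({y1, y2, y3} : Finset A.verts),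
        G.Adj x.1 y.1 := fun x hx y hy => hXY x hx y hy
    have A11 := hadj x1 (by simp) y1 (by simp)
    have A12 := hadj x1 (by simp) y2 (by simp)
    have A13 := hadj x1 (by simp) y3 (by simp)
    have A21 := hadj x2 (by simp) y1 (by simp)
    have A22 := hadj x2 (by simp) y2 (by simp)
    have A23 := hadj x2 (by simp) y3 (by simp)
    have Nx : x1.1 ≠ x2.1 := fun e => hx (Subtype.ext e)
    have N12 : y1.1 ≠ y2.1 := fun e => hy12 (Subtype.ext e)
    have N13 : y1.1 ≠ y3.1 := fun e => hy13 (Subtype.ext e)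
    have N23 : y2.1 ≠ y3.1 := fun e => hy23 (Subtype.ext e)
    rcases mem_verts A x1.2 with S1 | P1 <;> rcases mem_verts A x2.2 with S2 | P2
    · exact F1 A S1 S2 Nx y1.2 A11 A21
    · have Q1 : OnPath A y1.1 := by
        rcases mem_verts A y1.2 with hh | hh
        · exact absurd A11 (A.stable _ S1 _ hh)
        · exact hh
      have Q2 : OnPath A y2.1 := by
        rcases mem_verts A y2.2 with hh | hh
        · exact absurd A12 (A.stable _ S1 _ hh)
        · exact hh
      have Q3 : OnPath A y3.1 := by
        rcases mem_verts A y3.2 with hh | hh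
        · exact absurd A13 (A.stable _ S1 _ hh)
        · exact hh
      exact F2 A P2 Q1 Q2 Q3 N12 N13 N23 A21 A22 A23
    · have Q1 : OnPath A y1.1 := by
        rcases mem_verts A y1.2 with hh | hh
        · exact absurd A21 (A.stable _ S2 _ hh)
        · exact hh
      have Q2 : OnPath A y2.1 := by
        rcases mem_verts A y2.2 with hh | hh
        · exact absurd A22 (A.stable _ S2 _ hh)
        · exact hh
      have Q3 : OnPath A y3.1 := by
        rcases mem_verts A y3.2 with hh | hh
        · exact absurd A23 (A.stable _ S2 _ hh)
        · exact hh
      exact F2 A P1 Q1 Q2 Q3 N12 N13 N23 A11 A12 A13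
    · rcases mem_verts A y1.2 with T1 | Q1 <;>
      rcases mem_verts A y2.2 with T2 | Q2 <;>
      rcases mem_verts A y3.2 with T3 | Q3 <;>
      first
        | exact F1 A T1 T2 N12 x1.2 A11.symm A12.symm
        | exact F1 A T1 T3 N13 x1.2 A11.symm A13.symm
        | exact F1 A T2 T3 N23 x1.2 A12.symm A13.symm
        | exact Nx (F3 A P1 P2 Q1 Q2 N12 A11 A12 A21 A22)
        | exact Nx (F3 A P1 P2 Q1 Q3 N13 A11 A13 A21 A23)
        | exact Nx (F3 A P1 P2 Q2 Q3 N23 A12 A13 A22 A23)
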